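/- arXiv:2312.08683 — 3 statements merged into one kernel-verified Lean document; each statement's English description precedes it below -/
import Mathlib

section
/- Fix an integer n ≥ 1, a locally compact Hausdorff space X, principal 𝕋-bundles pᵢ : Bᵢ → X for 1 ≤ i ≤ n, and homeomorphisms fᵢ : X → X for 2 ≤ i ≤ n, and let C := {(c₁, …, cₙ) ∈ ∏ᵢ Bᵢ : pᵢ(cᵢ) = f_{i+1}(p_{i+1}(c_{i+1})) for 1 ≤ i ≤ n − 1} with the subspace topology. The compact group K_n := {(z₁, …, zₙ) ∈ 𝕋ⁿ : z₁⋯zₙ = 1} acts continuously on C by (z·c)ᵢ := zᵢ·cᵢ, and the orbit space B := C / K_n with the quotient topology is a locally compact Hausdorff space. -/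
open Topology

set_option synthInstance.maxHeartbeats 1000000
set_option maxHeartbeats 1000000

/-- A (locally trivial) principal `𝕋`-bundle: a continuous surjection `proj : B → X`
together with a continuous left action of the circle group `𝕋` on `B` that is
fibre-preserving, principal, and locally trivial. -/
structure PrincipalCircleBundle (B X : Type*) [TopologicalSpace B] [TopologicalSpace X] where
  proj : B → X
  smul : Circle → B → B
  continuous_proj : Continuous proj
  surjective_proj : Function.Surjective proj
  continuous_smul : Continuous fun p : Circle × B => smul p.1 p.2
  one_smul : ∀ b : B, smul 1 b = b
  mul_smul : ∀ (z w : Circle) (b : B), smul (z * w) b = smul z (smul w b)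
  proj_smul : ∀ (z : Circle) (b : B), proj (smul z b) = proj b
  principal : IsHomeomorph fun p : Circle × B =>
    (⟨(smul p.1 p.2, p.2), proj_smul p.1 p.2⟩ : {q : B × B // proj q.1 = proj q.2})
  locTriv : ∀ x : X, ∃ U : Set X, IsOpen U ∧ x ∈ U ∧
    ∃ S : X → B, ContinuousOn S U ∧ ∀ u ∈ U, proj (S u) = u


/-- The balanced fibred-product space `C` (here `n = m + 1`, with `f i` playing the rôle
of `f_{i+2}`). -/
def Cset (m : ℕ) {X : Type*} [TopologicalSpace X] (B : Fin (m + 1) → Type*)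
    [∀ i, TopologicalSpace (B i)] (P : ∀ i, PrincipalCircleBundle (B i) X)
    (f : Fin m → X ≃ₜ X) : Set (∀ i, B i) :=
  {c | ∀ i : Fin m, (P i.castSucc).proj (c i.castSucc) = f i ((P i.succ).proj (c i.succ))}

/-- Two elements of `C` are related iff they differ by the coordinatewise action of an
element of `K_n = {z ∈ 𝕋ⁿ : z₁⋯zₙ = 1}`; the orbit space `B = C/K_n` is `Quot` of this
relation, with the quotient topology. -/
def Krel (m : ℕ) {X : Type*} [TopologicalSpace X] (B : Fin (m + 1) → Type*)
    [∀ i, TopologicalSpace (B i)] (P : ∀ i, PrincipalCircleBundle (B i) X)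
    (f : Fin m → X ≃ₜ X) : ↥(Cset m B P f) → ↥(Cset m B P f) → Prop :=
  fun c c' => ∃ z : Fin (m + 1) → Circle, (∏ i, z i) = 1 ∧
    ∀ i, (P i).smul (z i) (c.1 i) = c'.1 i

section Aux

variable {m : ℕ} {X : Type*} [TopologicalSpace X] {B : Fin (m + 1) → Type*}
  [∀ i, TopologicalSpace (B i)]

/-- The closed subgroup `K_n = {z ∈ 𝕋ⁿ : z₁⋯zₙ = 1}` of the `n`-torus. -/
noncomputable def Ksub (m : ℕ) : Subgroup (Fin (m + 1) → Circle) where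
  carrier := {z | ∏ i, z i = 1}
  one_mem' := by simp
  mul_mem' := by
    intro a b ha hb
    simp only [Set.mem_setOf_eq, Pi.mul_apply] at *
    rw [Finset.prod_mul_distrib, ha, hb, mul_one]
  inv_mem' := by
    intro a ha
    simp only [Set.mem_setOf_eq, Pi.inv_apply] at *
    rw [Finset.prod_inv_distrib, ha, inv_one]

theorem Ksub_isClosed (m : ℕ) :
    IsClosed ((Ksub m : Subgroup (Fin (m + 1) → Circle)) : Set (Fin (m + 1) → Circle)) := by
  have : ((Ksub m : Subgroup (Fin (m + 1) → Circle)) : Set (Fin (m + 1) → Circle))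
      = {z | ∏ i, z i = 1} := rfl
  rw [this]
  exact isClosed_eq (by fun_prop) continuous_const

variable (P : ∀ i, PrincipalCircleBundle (B i) X) (f : Fin m → X ≃ₜ X)

theorem smul_mem_Cset (z : Fin (m + 1) → Circle) (c : ↥(Cset m B P f)) :
    (fun i => (P i).smul (z i) (c.1 i)) ∈ Cset m B P f := by
  intro i
  simp only [(P _).proj_smul]
  exact c.2 i

/-- The coordinatewise action of the full torus on `C`. -/
instance CsetAction : MulAction (Fin (m + 1) → Circle) ↥(Cset m B P f) where
  smul z c := ⟨fun i => (P i).smul (z i) (c.1 i), smul_mem_Cset P f z c⟩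
  one_smul c := Subtype.ext (funext fun i => (P i).one_smul _)
  mul_smul z w c := Subtype.ext (funext fun i => (P i).mul_smul _ _ _)

theorem smul_def' (z : Fin (m + 1) → Circle) (c : ↥(Cset m B P f)) :
    (z • c : ↥(Cset m B P f)).1 = fun i => (P i).smul (z i) (c.1 i) := rfl

instance : ContinuousSMul (Fin (m + 1) → Circle) ↥(Cset m B P f) where
  continuous_smul := by
    have h : Continuous fun p : (Fin (m + 1) → Circle) × ↥(Cset m B P f) =>
        (fun i => (P i).smul (p.1 i) (p.2.1 i) : ∀ i, B i) := by
      apply continuous_pi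
      intro i
      have h1 : Continuous fun p : (Fin (m + 1) → Circle) × ↥(Cset m B P f) =>
          ((p.1 i, p.2.1 i) : Circle × B i) :=
        ((continuous_apply i).comp continuous_fst).prodMk
          ((continuous_apply i).comp (continuous_subtype_val.comp continuous_snd))
      exact (P i).continuous_smul.comp h1
    exact h.subtype_mk _

theorem Cset_isClosed [T2Space X] : IsClosed (Cset m B P f) := by
  have : Cset m B P f = ⋂ i : Fin m, {c : ∀ i, B i |
      (P i.castSucc).proj (c i.castSucc) = f i ((P i.succ).proj (c i.succ))} := by
    ext c; simp [Cset, Set.mem_iInter]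
  rw [this]
  exact isClosed_iInter fun i => isClosed_eq
    ((P i.castSucc).continuous_proj.comp (continuous_apply _))
    ((f i).continuous.comp ((P i.succ).continuous_proj.comp (continuous_apply _)))

instance [T2Space X] [∀ i, T2Space (B i)] [∀ i, LocallyCompactSpace (B i)] :
    LocallyCompactSpace ↥(Cset m B P f) := (Cset_isClosed P f).locallyCompactSpace

/-- The compact full torus acts properly on `C`. -/
instance properTorus [∀ i, T2Space (B i)] :
    ProperSMul (Fin (m + 1) → Circle) ↥(Cset m B P f) where
  isProperMap_smul_pair := by
    set G := Fin (m + 1) → Circle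
    set C := ↥(Cset m B P f)
    let ψ : G × C → G × (C × C) := fun p => (p.1, (p.1 • p.2, p.2))
    have hψc : Continuous ψ := by
      refine continuous_fst.prodMk (Continuous.prodMk ?_ continuous_snd)
      exact continuous_smul
    have hψ : IsClosedEmbedding ψ := by
      constructor
      · have hli : Function.LeftInverse (fun q : G × (C × C) => (q.1, q.2.2)) ψ :=
          fun p => rfl
        exact hli.isEmbedding (by fun_prop) hψc
      · have : Set.range ψ = {q : G × (C × C) | q.2.1 = q.1 • q.2.2} := by
          ext q
          constructor
          · rintro ⟨p, rfl⟩; rfl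
          · intro hq
            exact ⟨(q.1, q.2.2), by ext <;> simp_all [ψ]⟩
        rw [this]
        exact isClosed_eq (by fun_prop) (continuous_fst.smul continuous_snd.snd)
    have hsnd : IsProperMap (Prod.snd : G × (C × C) → C × C) := by
      have h1 : IsProperMap (fun _ : G => Unit.unit) :=
        (continuous_const : Continuous fun _ : G => Unit.unit).isProperMap
      have h2 : IsProperMap (Prod.map (fun _ : G => Unit.unit) (id : C × C → C × C)) :=
        h1.prodMap isProperMap_id
      have h3 := (Homeomorph.punitProd (C × C)).isProperMap.comp h2
      exact h3
    have : (fun gx : G × C => (gx.1 • gx.2, gx.2)) = Prod.snd ∘ ψ := rfl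
    rw [this]
    exact hsnd.comp hψ.isProperMap

/-- `K_n` (as a closed subgroup) acts properly on `C`. -/
instance properK [∀ i, T2Space (B i)] : ProperSMul ↥(Ksub m) ↥(Cset m B P f) :=
  properSMul_of_isClosedEmbedding (Ksub m).subtype
    (Ksub_isClosed m).isClosedEmbedding_subtypeVal fun _ _ => rfl

theorem Krel_iff_orbitRel (c c' : ↥(Cset m B P f)) :
    Krel m B P f c c' ↔ (MulAction.orbitRel ↥(Ksub m) ↥(Cset m B P f)) c c' := by
  constructor
  · rintro ⟨z, hz, h⟩
    refine ⟨(⟨z, hz⟩ : ↥(Ksub m))⁻¹, ?_⟩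
    have hzc : (⟨z, hz⟩ : ↥(Ksub m)) • c = c' := Subtype.ext (funext h)
    show (⟨z, hz⟩ : ↥(Ksub m))⁻¹ • c' = c
    rw [← hzc]
    exact inv_smul_smul _ _
  · rintro ⟨k, hk⟩
    refine ⟨(k⁻¹ : ↥(Ksub m)).1, (k⁻¹ : ↥(Ksub m)).2, fun i => ?_⟩
    have : (k⁻¹ : ↥(Ksub m)) • c = c' := by rw [← hk]; exact inv_smul_smul _ _
    exact congrFun (congrArg Subtype.val this) i

/-- The orbit space `Quot (Krel …)` is canonically homeomorphic to the quotient by the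
orbit relation of the `K_n`-action. -/
noncomputable def quotHomeo :
    Quot (Krel m B P f) ≃ₜ Quotient (MulAction.orbitRel ↥(Ksub m) ↥(Cset m B P f)) where
  toEquiv := Quot.congrRight (Krel_iff_orbitRel P f)
  continuous_toFun := isQuotientMap_quot_mk.continuous_iff.mpr continuous_quot_mk
  continuous_invFun := isQuotientMap_quot_mk.continuous_iff.mpr continuous_quot_mk

end Aux

/-- `K_n` acts continuously on `C`, and the orbit space `B = C/K_n` with the quotient
topology is a locally compact Hausdorff space. -/
theorem stmt9 (m : ℕ) {X : Type*} [TopologicalSpace X] [T2Space X] [LocallyCompactSpace X]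
    (B : Fin (m + 1) → Type*) [∀ i, TopologicalSpace (B i)] [∀ i, T2Space (B i)]
    [∀ i, LocallyCompactSpace (B i)]
    (P : ∀ i, PrincipalCircleBundle (B i) X) (f : Fin m → X ≃ₜ X) :
    (∀ z : Fin (m + 1) → Circle, (∏ i, z i) = 1 → ∀ c : ↥(Cset m B P f),
      (fun i => (P i).smul (z i) (c.1 i)) ∈ Cset m B P f) ∧
    Continuous (fun q : {z : Fin (m + 1) → Circle // ∏ i, z i = 1} × ↥(Cset m B P f) =>
      fun i => (P i).smul (q.1.1 i) (q.2.1 i)) ∧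
    T2Space (Quot (Krel m B P f)) ∧
    LocallyCompactSpace (Quot (Krel m B P f)) := by
  refine ⟨fun z _ c => smul_mem_Cset P f z c, ?_, ?_, ?_⟩
  · apply continuous_pi
    intro i
    have h1 : Continuous fun q : {z : Fin (m + 1) → Circle // ∏ i, z i = 1} ×
        ↥(Cset m B P f) => ((q.1.1 i, q.2.1 i) : Circle × B i) :=
      ((continuous_apply i).comp (continuous_subtype_val.comp continuous_fst)).prodMk
        ((continuous_apply i).comp (continuous_subtype_val.comp continuous_snd))
    exact (P i).continuous_smul.comp h1
  · have hT2 : T2Space (Quotient (MulAction.orbitRel ↥(Ksub m) ↥(Cset m B P f))) :=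
      t2Space_quotient_mulAction_of_properSMul
    exact (quotHomeo P f).isEmbedding.t2Space
  · have hoq : IsOpenQuotientMap
        (Quotient.mk (MulAction.orbitRel ↥(Ksub m) ↥(Cset m B P f))) :=
      MulAction.isOpenQuotientMap_quotientMk
    have hLC : LocallyCompactSpace
        (Quotient (MulAction.orbitRel ↥(Ksub m) ↥(Cset m B P f))) :=
      hoq.locallyCompactSpace
    exact (quotHomeo P f).isClosedEmbedding.locallyCompactSpace
end

section
/- Fix an integer n ≥ 1, a locally compact Hausdorff space X, principal 𝕋-bundles pᵢ : Bᵢ → X for 1 ≤ i ≤ n, and homeomorphisms fᵢ : X → X for 2 ≤ i ≤ n; let C := {(c₁, …, cₙ) ∈ ∏ᵢ Bᵢ : pᵢ(cᵢ) = f_{i+1}(p_{i+1}(c_{i+1})) for 1 ≤ i ≤ n − 1}, let B := C / K_n with the quotient topology, and define p([c₁,…,cₙ]) := pₙ(cₙ) and z·[c₁,…,cₙ] := [c₁,…,z·cₙ]. Then: (1) for every [c₁,…,cₙ] ∈ B and every 1 ≤ i ≤ n − 1, pᵢ(cᵢ) = (f_{i+1} ∘ ⋯ ∘ fₙ)(p([c₁,…,cₙ]));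 (2) every x ∈ X has an open neighbourhood U and a continuous map S : U → B with p(S(u)) = u for all u ∈ U; hence p : B → X is a (locally trivial) principal 𝕋-bundle. -/
open Topology

/-- The composite `f_{i+1} ∘ ⋯ ∘ fₙ` (0-indexed: `f i ∘ f (i+1) ∘ ⋯ ∘ f (m-1)`). -/
def tailComp {X : Type*} (m : ℕ) (f : Fin m → X → X) (i : ℕ) : X → X :=
  ((List.ofFn f).drop i).foldr (· ∘ ·) id

namespace PrincipalCircleBundle

variable {B X : Type*} [TopologicalSpace B] [TopologicalSpace X]
  (P : PrincipalCircleBundle B X)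

/-- The fibre product appearing in the principality condition. -/
abbrev FP := {q : B × B // P.proj q.1 = P.proj q.2}

/-- The principal map, as a bundled homeomorphism. -/
noncomputable def homeo : Circle × B ≃ₜ P.FP :=
  P.principal.homeomorph _

lemma homeo_apply (p : Circle × B) :
    P.homeo p = (⟨(P.smul p.1 p.2, p.2), P.proj_smul p.1 p.2⟩ : P.FP) := rfl

/-- The "division" map. -/
noncomputable def divE (e : P.FP) : Circle := (P.homeo.symm e).1

lemma continuous_divE : Continuous P.divE :=
  continuous_fst.comp P.homeo.symm.continuous

lemma snd_symm (e : P.FP) : (P.homeo.symm e).2 = e.1.2 := by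
  have h := P.homeo.apply_symm_apply e
  rw [homeo_apply] at h
  exact congrArg (fun x => x.1.2) h

lemma smul_divE (e : P.FP) : P.smul (P.divE e) e.1.2 = e.1.1 := by
  have h := P.homeo.apply_symm_apply e
  rw [homeo_apply] at h
  have h1 := congrArg (fun x => x.1.1) h
  simpa [divE, P.snd_symm e] using h1

lemma smul_left_cancel {z w : Circle} {b : B} (h : P.smul z b = P.smul w b) : z = w := by
  have hinj := P.principal.injective
  have := @hinj (z, b) (w, b) (Subtype.ext (by simp [h]))
  exact congrArg Prod.fst this

lemma exists_smul_eq {b b' : B} (h : P.proj b = P.proj b') : ∃ z, P.smul z b' = b :=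
  ⟨P.divE ⟨(b, b'), h⟩, P.smul_divE ⟨(b, b'), h⟩⟩

lemma divE_unique {e : P.FP} {z : Circle} (h : P.smul z e.1.2 = e.1.1) : z = P.divE e :=
  P.smul_left_cancel (h.trans (P.smul_divE e).symm)

end PrincipalCircleBundle

section TailComp

variable {X : Type*} {m : ℕ} (f : Fin m → X → X)

lemma tailComp_last : tailComp m f m = id := by
  unfold tailComp
  rw [List.drop_eq_nil_of_le (by simp)]
  rfl

lemma tailComp_castSucc (i : Fin m) :
    tailComp m f i = f i ∘ tailComp m f (i + 1) := by
  unfold tailComp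
  rw [List.drop_eq_getElem_cons (by simpa using i.2)]
  simp [List.foldr_cons]

lemma continuous_foldr_comp [TopologicalSpace X] :
    ∀ l : List (X → X), (∀ g ∈ l, Continuous g) → Continuous (l.foldr (· ∘ ·) id)
  | [], _ => continuous_id
  | g :: l, h => by
    simpa using (h g (by simp)).comp
      (continuous_foldr_comp l fun g' hg' => h g' (by simp [hg']))

lemma continuous_tailComp [TopologicalSpace X] (hf : ∀ j, Continuous (f j)) (i : ℕ) :
    Continuous (tailComp m f i) := by
  apply continuous_foldr_comp
  intro g hg
  obtain ⟨j, rfl⟩ := List.mem_ofFn.mp (List.mem_of_mem_drop hg)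
  exact hf j

end TailComp

namespace PCBQ

open Function Set

variable {m : ℕ} {X : Type*} [TopologicalSpace X]
  {B : Fin (m + 1) → Type*} [∀ i, TopologicalSpace (B i)]
  {P : ∀ i, PrincipalCircleBundle (B i) X} {f : Fin m → X ≃ₜ X}

/-- Coordinatewise action of a tuple of circle elements on `Cset`. -/
def act (z : Fin (m + 1) → Circle) (c : ↥(Cset m B P f)) : ↥(Cset m B P f) :=
  ⟨fun i => (P i).smul (z i) (c.1 i), fun i => by
    show (P i.castSucc).proj ((P i.castSucc).smul (z i.castSucc) (c.1 i.castSucc)) =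
      f i ((P i.succ).proj ((P i.succ).smul (z i.succ) (c.1 i.succ)))
    rw [(P i.castSucc).proj_smul, (P i.succ).proj_smul]; exact c.2 i⟩

lemma act_one (c : ↥(Cset m B P f)) : act 1 c = c :=
  Subtype.ext (funext fun i => (P i).one_smul _)

lemma act_mul (z w : Fin (m + 1) → Circle) (c : ↥(Cset m B P f)) :
    act z (act w c) = act (z * w) c :=
  Subtype.ext (funext fun i => ((P i).mul_smul _ _ _).symm)

lemma continuous_act :
    Continuous fun q : (Fin (m + 1) → Circle) × ↥(Cset m B P f) => act (P := P) (f := f) q.1 q.2 := by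
  unfold act
  have h1 : Continuous fun q : (Fin (m + 1) → Circle) × ↥(Cset m B P f) =>
      (fun i => (P i).smul (q.1 i) (q.2.1 i) : ∀ i, B i) :=
    continuous_pi fun i => by
      have : Continuous fun q : (Fin (m + 1) → Circle) × ↥(Cset m B P f) =>
          ((q.1 i, q.2.1 i) : Circle × B i) :=
        ((continuous_apply i).comp continuous_fst).prodMk
          ((continuous_apply i).comp (continuous_subtype_val.comp continuous_snd))
      exact (P i).continuous_smul.comp this
  exact h1.subtype_mk _

lemma krel_equivalence : Equivalence (Krel m B P f) where
  refl c := ⟨1, by simp, fun i => (P i).one_smul _⟩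
  symm {c c'} h := by
    obtain ⟨z, hz, h⟩ := h
    refine ⟨z⁻¹, ?_, fun i => ?_⟩
    · rw [show (z⁻¹ : Fin (m + 1) → Circle) = fun i => (z i)⁻¹ from rfl,
        Finset.prod_inv_distrib, hz, inv_one]
    · show (P i).smul (z i)⁻¹ (c'.1 i) = c.1 i
      rw [← h i, ← (P i).mul_smul, inv_mul_cancel, (P i).one_smul]
  trans {a b c} h1 h2 := by
    obtain ⟨z, hz, h1⟩ := h1; obtain ⟨w, hw, h2⟩ := h2
    refine ⟨w * z, by rw [show (w * z : Fin (m + 1) → Circle) = fun i => w i * z i from rfl,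
      Finset.prod_mul_distrib, hz, hw, one_mul], fun i => ?_⟩
    show (P i).smul (w i * z i) (a.1 i) = c.1 i
    rw [(P i).mul_smul, h1 i, h2 i]

lemma mk_eq_mk {c c' : ↥(Cset m B P f)} :
    Quot.mk (Krel m B P f) c = Quot.mk _ c' ↔ Krel m B P f c c' :=
  ⟨fun h => (krel_equivalence).eqvGen_iff.mp (Quot.eqvGen_exact h), Quot.sound⟩

/-- The map `pr : C → X`. -/
def pr (c : ↥(Cset m B P f)) : X := (P (Fin.last m)).proj (c.1 (Fin.last m))

lemma continuous_pr : Continuous (pr (P := P) (f := f)) :=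
  (P _).continuous_proj.comp ((continuous_apply _).comp continuous_subtype_val)

lemma fibre_eq (c : ↥(Cset m B P f)) (i : Fin (m + 1)) :
    (P i).proj (c.1 i) = tailComp m (fun j => (f j : X → X)) i (pr c) := by
  induction i using Fin.reverseInduction with
  | last => rw [Fin.val_last, tailComp_last]; rfl
  | cast i ih =>
    rw [show (P i.castSucc).proj (c.1 i.castSucc) = f i ((P i.succ).proj (c.1 i.succ)) from c.2 i]
    rw [ih, Fin.coe_castSucc, tailComp_castSucc]
    simp only [Fin.val_succ, Function.comp_apply]

lemma pr_eq_of_krel {c c' : ↥(Cset m B P f)} (h : Krel m B P f c c') : pr c = pr c' := by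
  obtain ⟨z, _, h⟩ := h
  rw [pr, pr, ← h, (P _).proj_smul]

/-- The projection `p : B = C/K → X`. -/
def p : Quot (Krel m B P f) → X := Quot.lift pr fun _ _ h => pr_eq_of_krel h

lemma continuous_p : Continuous (p (P := P) (f := f)) :=
  continuous_quot_lift _ continuous_pr

lemma proj_eq_of_pr_eq {c c' : ↥(Cset m B P f)} (h : pr c = pr c') (i : Fin (m + 1)) :
    (P i).proj (c.1 i) = (P i).proj (c'.1 i) := by
  rw [fibre_eq, fibre_eq, h]

lemma isHomeomorph_act (z : Fin (m + 1) → Circle) :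
    IsHomeomorph (act (P := P) (f := f) z) := by
  rw [isHomeomorph_iff_exists_inverse]
  have hc : ∀ w : Fin (m + 1) → Circle, Continuous (act (P := P) (f := f) w) := fun w =>
    continuous_act.comp (continuous_const.prodMk continuous_id)
  exact ⟨hc z, act z⁻¹, fun c => by rw [act_mul, inv_mul_cancel, act_one],
    fun c => by rw [act_mul, mul_inv_cancel, act_one], hc z⁻¹⟩

lemma isOpenQuotientMap_mk : IsOpenQuotientMap (Quot.mk (Krel m B P f)) := by
  refine ⟨Quot.mk_surjective, continuous_quot_mk, ?_⟩
  intro V hV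
  rw [← isQuotientMap_quot_mk.isOpen_preimage]
  have : Quot.mk (Krel m B P f) ⁻¹' (Quot.mk _ '' V) =
      ⋃ z : Fin (m + 1) → Circle, ⋃ (_ : (∏ i, z i) = 1), act z '' V := by
    ext c
    simp only [Set.mem_preimage, Set.mem_image, Set.mem_iUnion]
    constructor
    · rintro ⟨v, hv, hmk⟩
      obtain ⟨z, hz, hact⟩ := mk_eq_mk.mp hmk
      exact ⟨z, hz, v, hv, Subtype.ext (funext hact)⟩
    · rintro ⟨z, hz, v, hv, rfl⟩
      exact ⟨v, hv, mk_eq_mk.mpr ⟨z, hz, fun i => rfl⟩⟩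
  rw [this]
  exact isOpen_iUnion fun z => isOpen_iUnion fun hz => (isHomeomorph_act z).isOpenMap V hV

lemma isClosed_prodOne :
    IsClosed {z : Fin (m + 1) → Circle | (∏ i, z i) = 1} :=
  isClosed_eq (continuous_finset_prod _ fun i _ => continuous_apply i) continuous_const

lemma t2space_quot [∀ i, T2Space (B i)] : T2Space (Quot (Krel m B P f)) := by
  rw [t2_iff_isClosed_diagonal]
  have hqq := (isOpenQuotientMap_mk (P := P) (f := f)).prodMap (isOpenQuotientMap_mk (P := P) (f := f))
  rw [← hqq.isQuotientMap.isClosed_preimage]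
  have hpre : Prod.map (Quot.mk (Krel m B P f)) (Quot.mk (Krel m B P f)) ⁻¹'
      Set.diagonal (Quot (Krel m B P f)) =
      {cc : ↥(Cset m B P f) × ↥(Cset m B P f) | Krel m B P f cc.1 cc.2} := by
    ext cc
    simp only [Set.mem_preimage, Set.mem_diagonal_iff, Prod.map_apply, Set.mem_setOf_eq]
    exact mk_eq_mk
  rw [hpre]
  set K : Set (Fin (m + 1) → Circle) := {z | (∏ i, z i) = 1} with hK
  haveI : CompactSpace K := isCompact_iff_compactSpace.mp isClosed_prodOne.isCompact
  set W : Set (K × (↥(Cset m B P f) × ↥(Cset m B P f))) :=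
    {w | act w.1.1 w.2.1 = w.2.2} with hWdef
  have hW : IsClosed W := by
    apply isClosed_eq
    · exact continuous_act.comp ((continuous_subtype_val.comp continuous_fst).prodMk
        (continuous_fst.comp continuous_snd))
    · exact continuous_snd.comp continuous_snd
  have himg : {cc : ↥(Cset m B P f) × ↥(Cset m B P f) | Krel m B P f cc.1 cc.2} =
      Prod.snd '' W := by
    ext cc
    constructor
    · rintro ⟨z, hz, h⟩
      exact ⟨⟨⟨z, hz⟩, cc⟩, Subtype.ext (funext h), rfl⟩
    · rintro ⟨⟨⟨z, hz⟩, cc'⟩, hact, rfl⟩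
      exact ⟨z, hz, fun i => congrFun (congrArg Subtype.val hact) i⟩
  rw [himg]
  exact isClosedMap_snd_of_compactSpace W hW

lemma isClosed_Cset [T2Space X] : IsClosed (Cset m B P f) := by
  have : Cset m B P f = ⋂ i : Fin m, {c : ∀ j, B j |
      (P i.castSucc).proj (c i.castSucc) = f i ((P i.succ).proj (c i.succ))} := by
    ext c
    simp only [Set.mem_iInter, Set.mem_setOf_eq]
    rfl
  rw [this]
  refine isClosed_iInter fun i => isClosed_eq ?_ ?_
  · exact (P i.castSucc).continuous_proj.comp (continuous_apply i.castSucc)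
  · exact (f i).continuous.comp ((P i.succ).continuous_proj.comp (continuous_apply i.succ))

lemma locallyCompact_quot [T2Space X] [∀ i, LocallyCompactSpace (B i)] :
    LocallyCompactSpace (Quot (Krel m B P f)) := by
  haveI : LocallyCompactSpace (↥(Cset m B P f)) := isClosed_Cset.locallyCompactSpace
  exact isOpenQuotientMap_mk.locallyCompactSpace

/-- The tuple which is `z` in the last coordinate and `1` elsewhere. -/
noncomputable def lastT (m : ℕ) (z : Circle) : Fin (m + 1) → Circle :=
  fun i => if i = Fin.last m then z else 1

lemma prod_lastT (z : Circle) : (∏ i, lastT m z i) = z := by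
  simp [lastT]

lemma krel_actLast (z : Circle) {c c' : ↥(Cset m B P f)} (h : Krel m B P f c c') :
    Krel m B P f (act (lastT m z) c) (act (lastT m z) c') := by
  obtain ⟨w, hw, h⟩ := h
  refine ⟨w, hw, fun i => ?_⟩
  show (P i).smul (w i) ((P i).smul (lastT m z i) (c.1 i)) = (P i).smul (lastT m z i) (c'.1 i)
  rw [← (P i).mul_smul, mul_comm, (P i).mul_smul, h i]

/-- The circle action on the quotient. -/
noncomputable def qsmul (z : Circle) : Quot (Krel m B P f) → Quot (Krel m B P f) :=
  Quot.lift (fun c => Quot.mk _ (act (lastT m z) c)) fun _ _ h => Quot.sound (krel_actLast z h)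

lemma qsmul_mk (z : Circle) (c : ↥(Cset m B P f)) :
    qsmul z (Quot.mk (Krel m B P f) c) = Quot.mk _ (act (lastT m z) c) := rfl

lemma qsmul_one (b : Quot (Krel m B P f)) : qsmul 1 b = b := by
  obtain ⟨c, rfl⟩ := Quot.exists_rep b
  rw [qsmul_mk]
  congr 1
  rw [show lastT m (1 : Circle) = 1 from funext fun i => by simp [lastT], act_one]

lemma qsmul_mul (z w : Circle) (b : Quot (Krel m B P f)) :
    qsmul (z * w) b = qsmul z (qsmul w b) := by
  obtain ⟨c, rfl⟩ := Quot.exists_rep b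
  rw [qsmul_mk, qsmul_mk, qsmul_mk, act_mul]
  congr 2
  funext i
  show lastT m (z * w) i = lastT m z i * lastT m w i
  by_cases hi : i = Fin.last m <;> simp [lastT, hi]

lemma p_qsmul (z : Circle) (b : Quot (Krel m B P f)) : p (qsmul z b) = p b := by
  obtain ⟨c, rfl⟩ := Quot.exists_rep b
  rw [qsmul_mk]
  show pr (act (lastT m z) c) = pr c
  rw [pr, pr]
  exact (P _).proj_smul _ _

lemma continuous_qsmul :
    Continuous fun q : Circle × Quot (Krel m B P f) => qsmul q.1 q.2 := by
  have h : IsOpenQuotientMap (Prod.map (id : Circle → Circle) (Quot.mk (Krel m B P f))) :=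
    IsOpenQuotientMap.id.prodMap isOpenQuotientMap_mk
  rw [← h.continuous_comp_iff]
  show Continuous fun zc : Circle × ↥(Cset m B P f) =>
    Quot.mk (Krel m B P f) (act (lastT m zc.1) zc.2)
  have hlast : Continuous fun z : Circle => lastT m z := by
    refine continuous_pi fun i => ?_
    by_cases hi : i = Fin.last m
    · simp only [lastT, if_pos hi]; exact continuous_id
    · simp only [lastT, if_neg hi]; exact continuous_const
  have h2 : Continuous fun zc : Circle × ↥(Cset m B P f) =>
      ((lastT m zc.1, zc.2) : (Fin (m + 1) → Circle) × ↥(Cset m B P f)) :=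
    (hlast.comp continuous_fst).prodMk continuous_snd
  exact continuous_quot_mk.comp (continuous_act.comp h2)

lemma g_castSucc (i : Fin m) :
    tailComp m (fun j => (f j : X → X)) i.castSucc =
      (f i : X → X) ∘ tailComp m (fun j => (f j : X → X)) i.succ := by
  rw [Fin.coe_castSucc, tailComp_castSucc]
  rfl

lemma local_sections (x : X) : ∃ U : Set X, IsOpen U ∧ x ∈ U ∧
    ∃ S : X → Quot (Krel m B P f), ContinuousOn S U ∧ ∀ u ∈ U, p (S u) = u := by
  classical
  set g : Fin (m + 1) → X → X := fun i => tailComp m (fun j => (f j : X → X)) i with hg_def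
  have hg : ∀ i, Continuous (g i) :=
    fun i => continuous_tailComp _ (fun j => (f j).continuous) _
  choose U hUo hUx s hs hsp using fun i : Fin (m + 1) => (P i).locTriv (g i x)
  set V : Set X := ⋂ i, (g i) ⁻¹' (U i) with hV_def
  have hVo : IsOpen V := isOpen_iInter_of_finite fun i => (hUo i).preimage (hg i)
  have hVx : x ∈ V := Set.mem_iInter.mpr fun i => hUx i
  have hmemU : ∀ i, ∀ u ∈ V, g i u ∈ U i := fun i u hu => Set.mem_iInter.mp hu i
  have hmem : ∀ u ∈ V, (fun i => s i (g i u)) ∈ Cset m B P f := by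
    intro u hu i
    show (P i.castSucc).proj (s i.castSucc (g i.castSucc u)) =
      f i ((P i.succ).proj (s i.succ (g i.succ u)))
    rw [hsp i.castSucc _ (hmemU i.castSucc u hu), hsp i.succ _ (hmemU i.succ u hu)]
    rw [show g i.castSucc = (f i : X → X) ∘ g i.succ from g_castSucc i]
    rfl
  refine ⟨V, hVo, hVx, fun u => if h : u ∈ V then Quot.mk _ ⟨_, hmem u h⟩
    else Quot.mk _ ⟨_, hmem x hVx⟩, ?_, ?_⟩
  · rw [continuousOn_iff_continuous_restrict]
    have hres : (V.domRestrict fun u => if h : u ∈ V then Quot.mk (Krel m B P f) ⟨_, hmem u h⟩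
        else Quot.mk _ ⟨_, hmem x hVx⟩) =
        fun u : V => Quot.mk (Krel m B P f) ⟨fun i => s i (g i u.1), hmem u.1 u.2⟩ := by
      funext u
      simp only [Set.domRestrict_apply, dif_pos u.2]
    rw [hres]
    apply continuous_quot_mk.comp
    have hco : Continuous fun u : V => (fun i => s i (g i u.1) : ∀ i, B i) := by
      refine continuous_pi fun i => ?_
      have : ContinuousOn (fun u => s i (g i u)) V :=
        (hs i).comp (hg i).continuousOn fun u hu => hmemU i u hu
      exact continuousOn_iff_continuous_restrict.mp this
    exact hco.subtype_mk _
  · intro u hu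
    simp only [dif_pos hu]
    show pr (⟨fun i => s i (g i u), hmem u hu⟩ : ↥(Cset m B P f)) = u
    rw [pr]
    show (P (Fin.last m)).proj (s (Fin.last m) (g (Fin.last m) u)) = u
    rw [hsp (Fin.last m) _ (hmemU (Fin.last m) u hu)]
    show tailComp m (fun j => (f j : X → X)) (Fin.last m) u = u
    rw [Fin.val_last, tailComp_last]
    rfl

lemma qsmul_eq_of (c c' : ↥(Cset m B P f)) (w : Fin (m + 1) → Circle)
    (hw : ∀ i, (P i).smul (w i) (c.1 i) = c'.1 i) :
    qsmul (∏ i, w i) (Quot.mk (Krel m B P f) c) = Quot.mk _ c' := by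
  rw [qsmul_mk]
  apply Quot.sound
  refine ⟨fun i => w i * (lastT m (∏ j, w j) i)⁻¹, ?_, fun i => ?_⟩
  · rw [Finset.prod_mul_distrib, Finset.prod_inv_distrib, prod_lastT, mul_inv_cancel]
  · show (P i).smul (w i * (lastT m (∏ j, w j) i)⁻¹)
      ((P i).smul (lastT m (∏ j, w j) i) (c.1 i)) = c'.1 i
    rw [← (P i).mul_smul, mul_assoc, inv_mul_cancel, mul_one, hw i]

lemma qsmul_injective (b : Quot (Krel m B P f)) {z z' : Circle}
    (h : qsmul z b = qsmul z' b) : z = z' := by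
  obtain ⟨c, rfl⟩ := Quot.exists_rep b
  rw [qsmul_mk, qsmul_mk] at h
  obtain ⟨u, hu, h⟩ := mk_eq_mk.mp h
  have hne : ∀ i, i ≠ Fin.last m → u i = 1 := by
    intro i hi
    have hi2 := h i
    have hl : lastT m z i = 1 := if_neg hi
    have hl' : lastT m z' i = 1 := if_neg hi
    rw [show ((act (lastT m z) c).1 i) = (P i).smul (lastT m z i) (c.1 i) from rfl,
      show ((act (lastT m z') c).1 i) = (P i).smul (lastT m z' i) (c.1 i) from rfl,
      hl, hl', (P i).one_smul] at hi2
    exact (P i).smul_left_cancel (hi2.trans ((P i).one_smul _).symm)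
  have hlast := h (Fin.last m)
  rw [show ((act (lastT m z) c).1 (Fin.last m)) =
      (P (Fin.last m)).smul (lastT m z (Fin.last m)) (c.1 (Fin.last m)) from rfl,
    show ((act (lastT m z') c).1 (Fin.last m)) =
      (P (Fin.last m)).smul (lastT m z' (Fin.last m)) (c.1 (Fin.last m)) from rfl,
    show lastT m z (Fin.last m) = z from if_pos rfl,
    show lastT m z' (Fin.last m) = z' from if_pos rfl,
    ← (P (Fin.last m)).mul_smul] at hlast
  have hul : u (Fin.last m) * z = z' := (P (Fin.last m)).smul_left_cancel hlast
  have hprod : (∏ i, u i) = u (Fin.last m) :=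
    Finset.prod_eq_single (Fin.last m) (fun i _ hi => hne i hi) (by simp)
  rw [hprod] at hu
  rw [← hul, hu, one_mul]

lemma existsUnique_qsmul
    (e : {q : Quot (Krel m B P f) × Quot (Krel m B P f) // p q.1 = p q.2}) :
    ∃! z : Circle, qsmul z e.1.2 = e.1.1 := by
  obtain ⟨⟨b1, b2⟩, hpe⟩ := e
  obtain ⟨c1, rfl⟩ := Quot.exists_rep b1
  obtain ⟨c2, rfl⟩ := Quot.exists_rep b2
  have hpr : pr c1 = pr c2 := hpe
  refine ⟨∏ i, (P i).divE ⟨(c1.1 i, c2.1 i), proj_eq_of_pr_eq hpr i⟩,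
    qsmul_eq_of c2 c1 _ (fun i => (P i).smul_divE _), fun z hz => ?_⟩
  exact qsmul_injective _ (hz.trans (qsmul_eq_of c2 c1 _ (fun i => (P i).smul_divE _)).symm)

/-- The division map on the fibred square of the quotient. -/
noncomputable def dmap
    (e : {q : Quot (Krel m B P f) × Quot (Krel m B P f) // p q.1 = p q.2}) : Circle :=
  (existsUnique_qsmul e).choose

lemma qsmul_dmap (e : {q : Quot (Krel m B P f) × Quot (Krel m B P f) // p q.1 = p q.2}) :
    qsmul (dmap e) e.1.2 = e.1.1 :=
  (existsUnique_qsmul e).choose_spec.1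

lemma dmap_unique {e : {q : Quot (Krel m B P f) × Quot (Krel m B P f) // p q.1 = p q.2}}
    {z : Circle} (h : qsmul z e.1.2 = e.1.1) : z = dmap e :=
  (existsUnique_qsmul e).choose_spec.2 z h

lemma continuous_dmap : Continuous (dmap (P := P) (f := f)) := by
  have hqq := (isOpenQuotientMap_mk (P := P) (f := f)).prodMap
    (isOpenQuotientMap_mk (P := P) (f := f))
  set S : Set (Quot (Krel m B P f) × Quot (Krel m B P f)) := {q | p q.1 = p q.2} with hS
  have hres : IsOpenQuotientMap
      (S.restrictPreimage (Prod.map (Quot.mk (Krel m B P f)) (Quot.mk (Krel m B P f)))) :=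
    ⟨hqq.surjective.restrictPreimage _, hqq.continuous.restrictPreimage,
      hqq.isOpenMap.restrictPreimage _⟩
  rw [← hres.continuous_comp_iff]
  have heq : (dmap ∘ S.restrictPreimage (Prod.map (Quot.mk (Krel m B P f)) (Quot.mk _))) =
      fun x : ↥(Prod.map (Quot.mk (Krel m B P f)) (Quot.mk (Krel m B P f)) ⁻¹' S) =>
        ∏ i, (P i).divE ⟨((x.1.1).1 i, (x.1.2).1 i),
          proj_eq_of_pr_eq (show pr x.1.1 = pr x.1.2 from x.2) i⟩ := by
    funext x
    symm
    apply dmap_unique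
    exact qsmul_eq_of _ _ _ (fun i => (P i).smul_divE _)
  rw [heq]
  refine continuous_finset_prod _ fun i _ => ?_
  have hsub : Continuous fun x : ↥(Prod.map (Quot.mk (Krel m B P f))
      (Quot.mk (Krel m B P f)) ⁻¹' S) => ((x.1.1.1 i, x.1.2.1 i) : B i × B i) :=
    ((continuous_apply i).comp (continuous_subtype_val.comp
        (continuous_fst.comp continuous_subtype_val))).prodMk
      ((continuous_apply i).comp (continuous_subtype_val.comp
        (continuous_snd.comp continuous_subtype_val)))
  exact (P i).continuous_divE.comp (hsub.subtype_mk _)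

lemma principal_quot : IsHomeomorph fun q : Circle × Quot (Krel m B P f) =>
    (⟨(qsmul q.1 q.2, q.2), p_qsmul q.1 q.2⟩ :
      {y : Quot (Krel m B P f) × Quot (Krel m B P f) // p y.1 = p y.2}) := by
  rw [isHomeomorph_iff_exists_inverse]
  refine ⟨Continuous.subtype_mk (continuous_qsmul.prodMk continuous_snd) _,
    fun e => (dmap e, e.1.2), fun q => ?_, fun e => ?_,
    continuous_dmap.prodMk (continuous_snd.comp continuous_subtype_val)⟩
  · exact Prod.ext (dmap_unique rfl).symm rfl
  · exact Subtype.ext (Prod.ext (qsmul_dmap e) rfl)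

end PCBQ

/-- (1) For `[c] ∈ B = C/K_n` the `i`-th fibre identity
`pᵢ(cᵢ) = (f_{i+1} ∘ ⋯ ∘ fₙ)(p([c]))` holds; (2) `p : B → X` admits continuous local
sections around every point; hence `p : B → X` is a (locally trivial) principal
`𝕋`-bundle. -/
theorem stmt11 (m : ℕ) {X : Type*} [TopologicalSpace X] [T2Space X] [LocallyCompactSpace X]
    (B : Fin (m + 1) → Type*) [∀ i, TopologicalSpace (B i)] [∀ i, T2Space (B i)]
    [∀ i, LocallyCompactSpace (B i)]
    (P : ∀ i, PrincipalCircleBundle (B i) X) (f : Fin m → X ≃ₜ X) :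
    ∃ p : Quot (Krel m B P f) → X,
      (∀ c : ↥(Cset m B P f),
        p (Quot.mk _ c) = (P (Fin.last m)).proj (c.1 (Fin.last m))) ∧
      (∀ c : ↥(Cset m B P f), ∀ i : Fin m,
        (P i.castSucc).proj (c.1 i.castSucc) =
          tailComp m (fun j => (f j : X → X)) (i : ℕ) (p (Quot.mk _ c))) ∧
      (∀ x : X, ∃ U : Set X, IsOpen U ∧ x ∈ U ∧
        ∃ S : X → Quot (Krel m B P f), ContinuousOn S U ∧ ∀ u ∈ U, p (S u) = u) ∧
      T2Space (Quot (Krel m B P f)) ∧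
      LocallyCompactSpace (Quot (Krel m B P f)) ∧
      ∃ Q : PrincipalCircleBundle (Quot (Krel m B P f)) X,
        Q.proj = p ∧
        ∀ (z : Circle) (c c' : ↥(Cset m B P f)),
          (∀ i, c'.1 i = if i = Fin.last m then (P i).smul z (c.1 i) else c.1 i) →
          Q.smul z (Quot.mk _ c) = Quot.mk _ c' := by
  classical
  refine ⟨PCBQ.p, fun c => rfl, fun c i => ?_, fun x => PCBQ.local_sections x,
    PCBQ.t2space_quot, PCBQ.locallyCompact_quot, ?_⟩
  · have := PCBQ.fibre_eq c i.castSucc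
    rw [Fin.coe_castSucc] at this
    exact this
  · have hsurj : Function.Surjective (PCBQ.p (P := P) (f := f)) := by
      intro x
      obtain ⟨U, _, hx, S, _, hS⟩ := PCBQ.local_sections (P := P) (f := f) x
      exact ⟨S x, hS x hx⟩
    refine ⟨{ proj := PCBQ.p
              smul := PCBQ.qsmul
              continuous_proj := PCBQ.continuous_p
              surjective_proj := hsurj
              continuous_smul := PCBQ.continuous_qsmul
              one_smul := PCBQ.qsmul_one
              mul_smul := PCBQ.qsmul_mul
              proj_smul := PCBQ.p_qsmul
              principal := PCBQ.principal_quot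
              locTriv := fun x => PCBQ.local_sections x }, rfl, ?_⟩
    intro z c c' h
    show PCBQ.qsmul z (Quot.mk _ c) = Quot.mk _ c'
    rw [PCBQ.qsmul_mk]
    congr 1
    refine Subtype.ext (funext fun i => ?_)
    rw [h i]
    show (P i).smul (PCBQ.lastT m z i) (c.1 i) = _
    by_cases hi : i = Fin.last m
    · simp [PCBQ.lastT, hi]
    · simp [PCBQ.lastT, hi, (P i).one_smul]
end

section
/- Let p : B → X be a principal 𝕋-bundle and let α : X → X be a homeomorphism. Let B̄ denote the conjugate bundle with projection q := α ∘ p (so q(b̄) = α(p(b))) and action z·b̄ := (z̄·b)‾. Let D be the quotient of {(b₁, b̄₂) ∈ B × B̄ : p(b₁) = α⁻¹(q(b̄₂))} by the relation (z·b₁, b̄₂) ∼ (b₁, z·b̄₂) for z ∈ 𝕋, with 𝕋-action z·[b₁, b̄₂] := [z·b₁, b̄₂], and equip X × 𝕋 with the 𝕋-action u·(x, z) := (x, uz). Then the map ψ : D → X × 𝕋 defined by ψ([b₁, b̄₂]) := (q(b̄₂), ⟨b₁, b₂⟩) is a well-defined 𝕋-equivariant homeomorphism. -/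
open Topology

/-- `⟨b₁, b₂⟩` : the unique circle element with `⟨b₁, b₂⟩ • b₂ = b₁`
(for `b₁, b₂` in the same fibre). -/
noncomputable def PrincipalCircleBundle.pairing {B X : Type*} [TopologicalSpace B]
    [TopologicalSpace X] (P : PrincipalCircleBundle B X) (b₁ b₂ : B) : Circle :=
  haveI := Classical.propDecidable (∃ z : Circle, P.smul z b₂ = b₁)
  if h : ∃ z : Circle, P.smul z b₂ = b₁ then h.choose else 1


/-- The fibred product `B ×_X B̄` of a bundle with its conjugate (the conjugate bundle `B̄`
is the copy of `B` with projection `q := α ∘ p` and action `z·b̄ := (z̄·b)‾`; here we record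
its elements by their underlying points of `B`, so the membership condition
`p(b₁) = α⁻¹(q(b̄₂))` reads `p(b₁) = α⁻¹(α(p(b₂)))`). -/
def Dset {B X : Type*} [TopologicalSpace B] [TopologicalSpace X]
    (P : PrincipalCircleBundle B X) (α : X ≃ₜ X) : Set (B × B) :=
  {q | P.proj q.1 = α.symm (α (P.proj q.2))}

/-- The relation `(z·b₁, b̄₂) ∼ (b₁, z·b̄₂)` on `B ×_X B̄` (in `B`-coordinates the second
entry of the right-hand pair is `z̄·b₂ = z⁻¹·b₂`); the balanced fibred product `D` is
`Quot` of this relation, with the quotient topology. -/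
def Drel {B X : Type*} [TopologicalSpace B] [TopologicalSpace X]
    (P : PrincipalCircleBundle B X) (α : X ≃ₜ X) :
    ↥(Dset P α) → ↥(Dset P α) → Prop :=
  fun q q' => ∃ z : Circle, q.1.1 = P.smul z q'.1.1 ∧ q'.1.2 = P.smul z⁻¹ q.1.2


section Helpers
variable {B X : Type*} [TopologicalSpace B] [TopologicalSpace X]
  (P : PrincipalCircleBundle B X)

/-- The principal homeomorphism `𝕋 × B ≃ₜ B ×_X B`. -/
noncomputable def PCB.E : (Circle × B) ≃ₜ {q : B × B // P.proj q.1 = P.proj q.2} :=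
  P.principal.homeomorph _

lemma PCB.E_apply (z : Circle) (b : B) :
    PCB.E P (z, b) = ⟨(P.smul z b, b), P.proj_smul z b⟩ := by
  simp [PCB.E]

/-- The circle coordinate of a point of the fibred product. -/
noncomputable def PCB.z (q : {q : B × B // P.proj q.1 = P.proj q.2}) : Circle :=
  ((PCB.E P).symm q).1

lemma PCB.b_spec (q : {q : B × B // P.proj q.1 = P.proj q.2}) :
    ((PCB.E P).symm q).2 = q.1.2 := by
  have h := (PCB.E P).apply_symm_apply q
  rw [show (PCB.E P).symm q = (((PCB.E P).symm q).1, ((PCB.E P).symm q).2) from rfl,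
    PCB.E_apply] at h
  exact congrArg (fun r => r.1.2) h

lemma PCB.z_spec (q : {q : B × B // P.proj q.1 = P.proj q.2}) :
    P.smul (PCB.z P q) q.1.2 = q.1.1 := by
  have h := (PCB.E P).apply_symm_apply q
  rw [show (PCB.E P).symm q = (((PCB.E P).symm q).1, ((PCB.E P).symm q).2) from rfl,
    PCB.E_apply] at h
  have h2 := PCB.b_spec P q
  have := congrArg (fun r => r.1.1) h
  simp only at this
  rw [h2] at this
  exact this

lemma PCB.z_uniq (q : {q : B × B // P.proj q.1 = P.proj q.2}) (z : Circle)
    (hz : P.smul z q.1.2 = q.1.1) : z = PCB.z P q := by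
  have : PCB.E P (z, q.1.2) = q := by
    rw [PCB.E_apply]; exact Subtype.ext (Prod.ext hz rfl)
  have := congrArg (fun r => ((PCB.E P).symm r).1) this
  simpa [PCB.z] using this

lemma PCB.pairing_eq (q : {q : B × B // P.proj q.1 = P.proj q.2}) :
    P.pairing q.1.1 q.1.2 = PCB.z P q := by
  have hex : ∃ z : Circle, P.smul z q.1.2 = q.1.1 := ⟨PCB.z P q, PCB.z_spec P q⟩
  unfold PrincipalCircleBundle.pairing
  rw [dif_pos hex]
  exact PCB.z_uniq P q _ hex.choose_spec

lemma PCB.proj_isOpenMap : IsOpenMap P.proj := by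
  intro V hV
  rw [isOpen_iff_mem_nhds]
  rintro x ⟨b, hbV, rfl⟩
  obtain ⟨U, hU, hxU, S, hS, hSp⟩ := P.locTriv (P.proj b)
  have hfib : P.proj b = P.proj (S (P.proj b)) := (hSp _ hxU).symm
  set w := PCB.z P ⟨(b, S (P.proj b)), hfib⟩ with hw
  have hwb : P.smul w (S (P.proj b)) = b := PCB.z_spec P ⟨(b, S (P.proj b)), hfib⟩
  set f : X → B := fun u => P.smul w (S u) with hf
  have hfc : ContinuousOn f U := by
    have : ContinuousOn (fun u => ((w, S u) : Circle × B)) U :=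
      (continuousOn_const.prodMk hS)
    exact P.continuous_smul.comp_continuousOn this
  have hfx : f (P.proj b) = b := hwb
  have hWo : IsOpen (U ∩ f ⁻¹' V) := hfc.isOpen_inter_preimage hU hV
  rw [mem_nhds_iff]
  refine ⟨U ∩ f ⁻¹' V, ?_, hWo, ⟨hxU, by simpa [hfx] using hbV⟩⟩
  rintro u ⟨huU, huV⟩
  exact ⟨f u, huV, by rw [hf]; simp only [P.proj_smul]; exact hSp u huU⟩

end Helpers
section Main
variable {B X : Type*} [TopologicalSpace B] [TopologicalSpace X]
  (P : PrincipalCircleBundle B X) (α : X ≃ₜ X)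

lemma PCB.dmem (q : ↥(Dset P α)) : P.proj q.1.1 = P.proj q.1.2 := by
  have := q.2; simpa [Dset] using this

/-- View a point of `Dset` in the plain fibred product. -/
def PCB.toFib (q : ↥(Dset P α)) : {q : B × B // P.proj q.1 = P.proj q.2} :=
  ⟨q.1, PCB.dmem P α q⟩

/-- Circle coordinate on `Dset`. -/
noncomputable def PCB.Z (q : ↥(Dset P α)) : Circle := PCB.z P (PCB.toFib P α q)

lemma PCB.Z_spec (q : ↥(Dset P α)) : P.smul (PCB.Z P α q) q.1.2 = q.1.1 :=
  PCB.z_spec P (PCB.toFib P α q)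

lemma PCB.Z_uniq (q : ↥(Dset P α)) (z : Circle) (hz : P.smul z q.1.2 = q.1.1) :
    z = PCB.Z P α q := PCB.z_uniq P (PCB.toFib P α q) z hz

lemma PCB.smul_comm' (z w : Circle) (b : B) :
    P.smul z (P.smul w b) = P.smul w (P.smul z b) := by
  rw [← P.mul_smul, ← P.mul_smul, mul_comm]

noncomputable def PCB.phi (q : ↥(Dset P α)) : X × Circle :=
  (α (P.proj q.1.2), PCB.Z P α q)

lemma PCB.phi_sound : ∀ q q', Drel P α q q' → PCB.phi P α q = PCB.phi P α q' := by
  rintro q q' ⟨z, h1, h2⟩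
  have hb : P.smul z q'.1.2 = q.1.2 := by
    rw [h2, ← P.mul_smul, mul_inv_cancel, P.one_smul]
  have hZ : PCB.Z P α q' = PCB.Z P α q := by
    apply PCB.Z_uniq
    rw [← hb, PCB.smul_comm', PCB.Z_spec, h1]
  simp only [PCB.phi, hZ, ← hb, P.proj_smul]

noncomputable def PCB.psi : Quot (Drel P α) → X × Circle :=
  Quot.lift (PCB.phi P α) (PCB.phi_sound P α)

/-- `phi` as composition of a homeomorphism with an explicit open map. -/
lemma PCB.phi_eq_comp : PCB.phi P α =
    (fun p : Circle × B => (α (P.proj p.2), p.1)) ∘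
      (fun q : ↥(Dset P α) => (PCB.E P).symm (PCB.toFib P α q)) := by
  funext q
  simp only [Function.comp_apply, PCB.phi, PCB.Z, PCB.z]
  rw [PCB.b_spec P (PCB.toFib P α q)]
  rfl

lemma PCB.toFib_homeo : IsHomeomorph (fun q : ↥(Dset P α) =>
    (PCB.E P).symm (PCB.toFib P α q)) := by
  have hset : Dset P α = {q : B × B | P.proj q.1 = P.proj q.2} := by
    ext q; simp [Dset]
  have : (fun q : ↥(Dset P α) => (PCB.E P).symm (PCB.toFib P α q)) =
      ((Homeomorph.setCongr hset).trans (PCB.E P).symm) := by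
    funext q; rfl
  rw [this]
  exact Homeomorph.isHomeomorph _

lemma PCB.m_cont : Continuous (fun p : Circle × B => (α (P.proj p.2), p.1)) :=
  ((α.continuous.comp P.continuous_proj).comp continuous_snd).prodMk continuous_fst

lemma PCB.m_open : IsOpenMap (fun p : Circle × B => (α (P.proj p.2), p.1)) := by
  have h1 : IsOpenMap (Prod.map (id : Circle → Circle) (fun b => α (P.proj b))) :=
    IsOpenMap.id.prodMap (α.isOpenMap.comp (PCB.proj_isOpenMap P))
  have h2 : IsOpenMap (Prod.swap : Circle × X → X × Circle) :=
    (Homeomorph.prodComm _ _).isOpenMap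
  exact h2.comp h1

lemma PCB.phi_cont : Continuous (PCB.phi P α) := by
  rw [PCB.phi_eq_comp]
  exact (PCB.m_cont P α).comp (PCB.toFib_homeo P α).continuous

lemma PCB.phi_open : IsOpenMap (PCB.phi P α) := by
  rw [PCB.phi_eq_comp]
  exact (PCB.m_open P α).comp (PCB.toFib_homeo P α).isOpenMap

lemma PCB.psi_cont : Continuous (PCB.psi P α) :=
  continuous_quot_lift _ (PCB.phi_cont P α)

lemma PCB.psi_open : IsOpenMap (PCB.psi P α) := by
  intro U hU
  have : PCB.psi P α '' U = PCB.phi P α '' (Quot.mk _ ⁻¹' U) := by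
    ext y
    constructor
    · rintro ⟨e, heU, rfl⟩
      obtain ⟨q, rfl⟩ := Quot.exists_rep e
      exact ⟨q, heU, rfl⟩
    · rintro ⟨q, hq, rfl⟩
      exact ⟨Quot.mk _ q, hq, rfl⟩
  rw [this]
  exact PCB.phi_open P α _ (continuous_quot_mk.isOpen_preimage U hU)

lemma PCB.psi_inj : Function.Injective (PCB.psi P α) := by
  refine Quot.ind fun q => Quot.ind fun q' h => ?_
  simp only [PCB.psi, PCB.phi] at h
  have h1 : α (P.proj q.1.2) = α (P.proj q'.1.2) := congrArg Prod.fst h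
  have hps : P.proj q.1.2 = P.proj q'.1.2 := α.injective h1
  have hZ : PCB.Z P α q = PCB.Z P α q' := congrArg Prod.snd h
  set w := PCB.z P ⟨(q.1.2, q'.1.2), hps⟩ with hwdef
  have hw : P.smul w q'.1.2 = q.1.2 := PCB.z_spec P ⟨(q.1.2, q'.1.2), hps⟩
  apply Quot.sound
  refine ⟨w, ?_, ?_⟩
  · rw [← PCB.Z_spec P α q, ← hw, PCB.smul_comm', hZ, PCB.Z_spec]
  · rw [← hw, ← P.mul_smul, inv_mul_cancel, P.one_smul]

lemma PCB.psi_surj : Function.Surjective (PCB.psi P α) := by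
  rintro ⟨x, z⟩
  obtain ⟨b, hb⟩ := P.surjective_proj (α.symm x)
  have hmem : (P.smul z b, b) ∈ Dset P α := by
    simp [Dset, P.proj_smul]
  refine ⟨Quot.mk _ ⟨(P.smul z b, b), hmem⟩, ?_⟩
  simp only [PCB.psi, PCB.phi]
  have hz : z = PCB.Z P α ⟨(P.smul z b, b), hmem⟩ := PCB.Z_uniq P α _ z rfl
  rw [← hz, hb]
  simp

end Main

section Act
variable {B X : Type*} [TopologicalSpace B] [TopologicalSpace X]
  (P : PrincipalCircleBundle B X) (α : X ≃ₜ X)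

lemma PCB.actmem (z : Circle) (q : ↥(Dset P α)) :
    (P.smul z q.1.1, q.1.2) ∈ Dset P α := by
  have := q.2
  simpa [Dset, P.proj_smul] using this

lemma PCB.act_sound (z : Circle) : ∀ q q', Drel P α q q' →
    Drel P α ⟨(P.smul z q.1.1, q.1.2), PCB.actmem P α z q⟩
      ⟨(P.smul z q'.1.1, q'.1.2), PCB.actmem P α z q'⟩ := by
  rintro q q' ⟨w, h1, h2⟩
  exact ⟨w, by show P.smul z q.1.1 = P.smul w (P.smul z q'.1.1); rw [h1, PCB.smul_comm'], h2⟩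

noncomputable def PCB.act (z : Circle) : Quot (Drel P α) → Quot (Drel P α) :=
  Quot.map (fun q => ⟨(P.smul z q.1.1, q.1.2), PCB.actmem P α z q⟩)
    (PCB.act_sound P α z)

end Act


/-- The map `ψ : D → X × 𝕋`, `[b₁, b̄₂] ↦ (q(b̄₂), ⟨b₁, b₂⟩) = (α(p(b₂)), ⟨b₁, b₂⟩)`, is a
well-defined `𝕋`-equivariant homeomorphism, where the `𝕋`-action on `D` is
`z·[b₁, b̄₂] := [z·b₁, b̄₂]` and the `𝕋`-action on `X × 𝕋` is `u·(x, z) := (x, uz)`. -/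
theorem stmt14 {B X : Type*} [TopologicalSpace B] [TopologicalSpace X]
    [T2Space B] [LocallyCompactSpace B] [T2Space X] [LocallyCompactSpace X]
    (P : PrincipalCircleBundle B X) (α : X ≃ₜ X) :
    ∃ act : Circle → Quot (Drel P α) → Quot (Drel P α),
      (∀ (z : Circle) (q q' : ↥(Dset P α)), q'.1.1 = P.smul z q.1.1 → q'.1.2 = q.1.2 →
        act z (Quot.mk _ q) = Quot.mk _ q') ∧
      ∃ ψ : Quot (Drel P α) → X × Circle,
        (∀ q : ↥(Dset P α),
          ψ (Quot.mk _ q) = (α (P.proj q.1.2), P.pairing q.1.1 q.1.2)) ∧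
        IsHomeomorph ψ ∧
        ∀ (u : Circle) (e : Quot (Drel P α)),
          ψ (act u e) = ((ψ e).1, u * (ψ e).2) := by
  refine ⟨PCB.act P α, ?_, PCB.psi P α, ?_, ?_, ?_⟩
  · intro z q q' h1 h2
    have : (⟨(P.smul z q.1.1, q.1.2), PCB.actmem P α z q⟩ : ↥(Dset P α)) = q' :=
      Subtype.ext (Prod.ext h1.symm h2.symm)
    exact congrArg (Quot.mk (Drel P α)) this
  · intro q
    have : P.pairing q.1.1 q.1.2 = PCB.Z P α q := PCB.pairing_eq P (PCB.toFib P α q)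
    simp [PCB.psi, PCB.phi, this]
  · exact ⟨PCB.psi_cont P α, PCB.psi_open P α, PCB.psi_inj P α, PCB.psi_surj P α⟩
  · intro u e
    induction e using Quot.ind with
    | _ q =>
      simp only [PCB.act, Quot.map, PCB.psi, PCB.phi]
      refine Prod.ext rfl ?_
      simp only
      symm
      apply PCB.Z_uniq
      simp only
      rw [P.mul_smul, PCB.Z_spec]
end
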